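/- For non-negative integers n and p, the identity [2n+2p choose p]_q = Σ_{j≥0} q^{j(n+j)} [n+p choose j]_q [n+p choose p-j]_q holds. -/

import Mathlib

open Polynomial

/-- The `q`-factorial `[n]! = ∏_{i=1}^n (1 + q + ⋯ + q^{i-1})` in `ℚ(q)`. -/
noncomputable def qFac (n : ℕ) : RatFunc ℚ :=
  ∏ i ∈ Finset.range n, ∑ j ∈ Finset.range (i + 1), RatFunc.X ^ j

/-- The Gaussian binomial coefficient `[n choose m]_q`, zero when out of range. -/
noncomputable def qBinom (n m : ℕ) : RatFunc ℚ :=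
  if m ≤ n then qFac n / (qFac (n - m) * qFac m) else 0

/-!
With `a = n`, `r = p` and `k = n + p` this is the `q`-Vandermonde identity
`[a + r + k, r] = ∑ⱼ q^{j(a+j)} [k, j] [a + r, r - j]`, proved by induction on `k`: expand the
left-hand side by the `q`-Pascal rule `[m + j + 1, j + 1] = q^m [m + j, j] + [m + j, j + 1]`,
apply the induction hypothesis to both terms, and recombine termwise with the same rule for
`[k + 1, j + 1]`.
-/

local notation "q" => (RatFunc.X : RatFunc ℚ)

noncomputable def qInt (m : ℕ) : RatFunc ℚ := ∑ j ∈ Finset.range m, q ^ j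

theorem qInt_add (m n : ℕ) : qInt (m + n) = qInt m + q ^ m * qInt n := by
  simp only [qInt, Finset.sum_range_add, Finset.mul_sum, pow_add]

theorem qInt_succ_ne_zero (m : ℕ) : qInt (m + 1) ≠ 0 := by
  have hpoly :
      qInt (m + 1) = algebraMap ℚ[X] (RatFunc ℚ) (∑ j ∈ Finset.range (m + 1), X ^ j) := by
    simp [qInt, RatFunc.algebraMap_X]
  rw [hpoly]
  refine RatFunc.algebraMap_ne_zero fun h => ?_
  have h_eval_one := congrArg (eval 1) h
  simp only [eval_finsetSum, eval_pow, eval_X, one_pow, Finset.sum_const, Finset.card_range,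
    nsmul_eq_mul, mul_one, eval_zero] at h_eval_one
  exact_mod_cast h_eval_one

theorem qFac_zero : qFac 0 = 1 := Finset.prod_range_zero _

theorem qFac_succ (n : ℕ) : qFac (n + 1) = qFac n * qInt (n + 1) :=
  Finset.prod_range_succ _ _

theorem qFac_ne_zero (n : ℕ) : qFac n ≠ 0 := by
  induction n with
  | zero => simp [qFac_zero]
  | succ n ih => rw [qFac_succ]; exact mul_ne_zero ih (qInt_succ_ne_zero n)

theorem add_qBinom (m j : ℕ) : qBinom (m + j) j = qFac (m + j) / (qFac m * qFac j) := by
  simp [qBinom]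

theorem qBinom_self (n : ℕ) : qBinom n n = 1 := by
  simpa [qFac_zero, qFac_ne_zero] using add_qBinom 0 n

theorem qBinom_zero_right (n : ℕ) : qBinom n 0 = 1 := by
  simpa [qFac_zero, qFac_ne_zero] using add_qBinom n 0

theorem qBinom_of_lt {n m : ℕ} (h : n < m) : qBinom n m = 0 := if_neg (Nat.not_le.mpr h)

theorem qBinom_add_succ_succ (m j : ℕ) :
    qBinom (m + j + 1) (j + 1) = q ^ m * qBinom (m + j) j + qBinom (m + j) (j + 1) := by
  cases m with
  | zero => simp [qBinom_self, qBinom_of_lt]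
  | succ l =>
    simp only [qBinom,
      if_pos (by omega : j + 1 ≤ l + 1 + j + 1), if_pos (by omega : j ≤ l + 1 + j),
      if_pos (by omega : j + 1 ≤ l + 1 + j),
      show l + 1 + j + 1 - (j + 1) = l + 1 by omega, show l + 1 + j - j = l + 1 by omega,
      show l + 1 + j - (j + 1) = l by omega]
    rw [qFac_succ (l + 1 + j), qFac_succ l, qFac_succ j,
      show l + 1 + j + 1 = (l + 1) + (j + 1) by ring, qInt_add]
    field_simp [qFac_ne_zero, qInt_succ_ne_zero]
    ring

/-- Multiplying the `q`-Pascal rule by `q ^ j` removes the exponent `n - j`, so that it holds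
for all `j`, including `j > n` where both sides vanish. -/
theorem pow_mul_qBinom_succ_succ (n j : ℕ) :
    q ^ j * qBinom (n + 1) (j + 1) = q ^ n * qBinom n j + q ^ j * qBinom n (j + 1) := by
  rcases le_or_gt j n with h | h
  · obtain ⟨m, rfl⟩ := Nat.exists_eq_add_of_le' h
    rw [qBinom_add_succ_succ, pow_add]
    ring
  · rw [qBinom_of_lt h, qBinom_of_lt (by omega), qBinom_of_lt (by omega)]
    ring

theorem qBinom_vandermonde (a r k : ℕ) :
    qBinom (a + r + k) r =
      ∑ j ∈ Finset.range (r + 1), q ^ (j * (a + j)) * qBinom k j * qBinom (a + r) (r - j) := by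
  induction k generalizing a r with
  | zero => simp [Finset.sum_range_succ', qBinom_of_lt, qBinom_self]
  | succ k ih =>
    cases r with
    | zero => simp [qBinom_zero_right]
    | succ s =>
      have pascal := qBinom_add_succ_succ (a + k + 1) s
      have ih_shift := ih (a + 1) s
      rw [show a + k + 1 + s = a + (s + 1) + k by ring] at pascal
      rw [show a + 1 + s = a + (s + 1) by ring] at ih_shift
      rw [← add_assoc, pascal, ih_shift, ih a (s + 1),
        Finset.sum_range_succ' _ (s + 1), Finset.sum_range_succ' _ (s + 1), Finset.mul_sum,
        ← add_assoc, ← Finset.sum_add_distrib]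
      congr 1
      · refine Finset.sum_congr rfl fun i _ => ?_
        rw [Nat.add_sub_add_right]
        linear_combination (q ^ (a + 1 + i * (a + 1 + i)) * qBinom (a + (s + 1)) (s - i)) *
          (pow_mul_qBinom_succ_succ k i).symm
      · simp [qBinom_zero_right]

theorem q_main_identity (n p : ℕ) :
    qBinom (2 * n + 2 * p) p =
      ∑ j ∈ Finset.range (p + 1),
        RatFunc.X ^ (j * (n + j)) * qBinom (n + p) j * qBinom (n + p) (p - j) := by
  rw [show 2 * n + 2 * p = n + p + (n + p) by ring]
  exact qBinom_vandermonde n p (n + p)
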